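/- For all n ≥ 1, 2·Σ_{i=1}^n i·Q_i = (n-1)·Q_{n+1} + n·Q_n + 2, where Q_n is the n-th companion Pell number. -/
import Mathlib


def compPell : ℕ → ℤ
  | 0 => 2
  | 1 => 2
  | n + 2 => 2 * compPell (n + 1) + compPell n

theorem stmt16 (n : ℕ) (hn : 1 ≤ n) :
    2 * (∑ i ∈ Finset.Icc 1 n, (i : ℤ) * compPell i) =
      ((n : ℤ) - 1) * compPell (n + 1) + (n : ℤ) * compPell n + 2 := by
  induction n with
  | zero => omega
  | succ m ih =>
    rcases Nat.eq_or_lt_of_le hn with h | h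
    · simp [← h, compPell]
    · have hm : 1 ≤ m := by omega
      rw [Finset.sum_Icc_succ_top (by omega : 1 ≤ m + 1), mul_add, ih hm,
        show m + 1 + 1 = m + 2 from rfl, compPell]
      push_cast
      ring
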